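/- arXiv:2401.00382 — 6 statements merged into one kernel-verified Lean document; each statement's English description precedes it below -/
import Mathlib

section
/- Let X be a topological vector space over K (K = ℝ or ℂ) and let Y be a linear subspace of X such that w(X) ≤ codim(Y) = α, where codim(Y) denotes the dimension of the quotient space X/Y. Then X \ Y is α-dense-lineable in X; that is, there exists a dense linear subspace Z of X with dim(Z) = α and Z ⊆ (X \ Y) ∪ {0}. -/
/-!
Take a basis of `X` of cardinality `w(X) ≤ α` and enumerate its nonempty members along the initial
ordinal of their cardinal. By transfinite recursion choose in each of them a point outside `Y` plus
the span of the points chosen before: fewer than `α` points have been chosen, so this is a proper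
subspace, and a proper subspace of a topological vector space has empty interior. The chosen
points are linearly independent modulo `Y`, so their span `S` is dense and meets `Y` only in `0`.
Any complement `Z ⊇ S` of `Y` is then dense, avoids `Y \ {0}` and has `dim Z = codim Y = α`.
-/

universe u

open Cardinal

/-- The weight of a topological space: the smallest cardinality of a basis for its topology. -/
noncomputable def tsWeight (X : Type u) [TopologicalSpace X] : Cardinal.{u} :=
  sInf { c : Cardinal.{u} | ∃ B : Set (Set X),
    TopologicalSpace.IsTopologicalBasis B ∧ #↥B = c }

open Set Submodule TopologicalSpace

theorem WellFoundedLT.exists_forall_of_forall_exists {τ α : Type*} [Preorder τ] [WellFoundedLT τ]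
    (P : (t : τ) → (Iio t → α) → α → Prop) (h : ∀ t prev, ∃ a, P t prev a) :
    ∃ f : τ → α, ∀ t, P t (fun s => f s) (f t) := by
  choose c hc using h
  refine ⟨WellFoundedLT.fix fun t prev => c t fun s => prev s s.2, fun t => ?_⟩
  rw [WellFoundedLT.fix_eq]
  exact hc _ _

theorem linearIndependent_of_notMem_span_image_Iio {K V ι : Type*} [DivisionRing K]
    [AddCommGroup V] [Module K V] [LinearOrder ι] {f : ι → V}
    (hf : ∀ i, f i ∉ span K (f '' Iio i)) : LinearIndependent K f := by
  classical
  refine linearIndependent_iff_finset_linearIndependent.2 fun s => ?_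
  induction s using Finset.induction_on_max with
  | empty => exact linearIndependent_empty_type
  | insert a s hlt ih =>
    change LinearIndepOn K f (insert a s : Finset ι)
    rw [Finset.coe_insert]
    exact LinearIndepOn.insert ih fun h => hf a (span_mono (image_mono hlt) h)

theorem exists_linearIndependent_forall_mem {K : Type*} {V ι : Type u} [DivisionRing K]
    [AddCommGroup V] [Module K V] (A : ι → Set V)
    (hA : ∀ i (s : Set V), #s < #ι → ∃ x ∈ A i, x ∉ span K s) :
    ∃ f : ι → V, (∀ i, f i ∈ A i) ∧ LinearIndependent K f := by
  -- Along the initial ordinal of `#ι`, every index has fewer than `#ι` predecessors.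
  obtain ⟨e⟩ : Nonempty ((#ι).ord.ToType ≃ ι) := Cardinal.eq.1 (mk_ord_toType _)
  obtain ⟨g, hg⟩ := WellFoundedLT.exists_forall_of_forall_exists
    (fun t prev x => x ∈ A (e t) ∧ x ∉ span K (range prev))
    fun t prev => hA (e t) _ (mk_range_le.trans_lt (by simpa using mk_Iio_lt t))
  refine ⟨g ∘ e.symm, fun i => by simpa using (hg (e.symm i)).1, ?_⟩
  refine (linearIndependent_of_notMem_span_image_Iio fun t => ?_).comp _ e.symm.injective
  simpa [image_eq_range] using (hg t).2

theorem Submodule.span_ne_top_of_mk_lt_rank {K V : Type*} [DivisionRing K] [AddCommGroup V]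
    [Module K V] {s : Set V} (hs : #s < Module.rank K V) : span K s ≠ ⊤ := by
  intro h
  have := rank_span_le (R := K) s
  rw [h, rank_top] at this
  exact hs.not_ge this

theorem Submodule.exists_mem_notMem_of_ne_top {R M : Type*} [Ring R] [TopologicalSpace R]
    [Filter.NeBot (nhdsWithin 0 { x : R | IsUnit x })] [TopologicalSpace M] [AddCommGroup M]
    [ContinuousAdd M] [Module R M] [ContinuousSMul R M] {p : Submodule R M} (hp : p ≠ ⊤)
    {U : Set M} (hU : IsOpen U) (hne : U.Nonempty) : ∃ x ∈ U, x ∉ p := by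
  by_contra! h
  exact hp (p.eq_top_of_nonempty_interior' (hne.mono (hU.subset_interior_iff.2 h)))

section

variable {𝕜 : Type*} {X : Type u} [NontriviallyNormedField 𝕜] [AddCommGroup X] [Module 𝕜 X]
  [TopologicalSpace X] [ContinuousAdd X] [ContinuousSMul 𝕜 X]

theorem Submodule.exists_mem_mkQ_notMem_span (Y : Submodule 𝕜 X) {U : Set X} (hU : IsOpen U)
    (hne : U.Nonempty) {s : Set (X ⧸ Y)} (hs : #s < Module.rank 𝕜 (X ⧸ Y)) :
    ∃ x ∈ U, Y.mkQ x ∉ span 𝕜 s := by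
  have := NormedField.nhdsWithin_isUnit_neBot (α := 𝕜)
  have hp : comap Y.mkQ (span 𝕜 s) ≠ ⊤ := fun h => span_ne_top_of_mk_lt_rank hs <|
    comap_injective_of_surjective Y.mkQ_surjective (by rw [h, comap_top])
  exact exists_mem_notMem_of_ne_top hp hU hne

theorem Submodule.exists_dense_disjoint (Y : Submodule 𝕜 X) {B : Set (Set X)}
    (hB : IsTopologicalBasis B) (hBY : #B ≤ Module.rank 𝕜 (X ⧸ Y)) :
    ∃ S : Submodule 𝕜 X, Dense (S : Set X) ∧ Disjoint Y S := by
  let ι := {U : Set X // U ∈ B ∧ U.Nonempty}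
  have hι : #ι ≤ Module.rank 𝕜 (X ⧸ Y) := (mk_le_mk_of_subset fun U hU => hU.1).trans hBY
  obtain ⟨f, hfU, hf⟩ := exists_linearIndependent_forall_mem (K := 𝕜) (fun U : ι => Y.mkQ '' U.1)
    fun U s hs => by
      obtain ⟨x, hxU, hx⟩ := Y.exists_mem_mkQ_notMem_span (hB.isOpen U.2.1) U.2.2 (hs.trans_le hι)
      exact ⟨_, mem_image_of_mem _ hxU, hx⟩
  choose g hgU hgf using hfU
  refine ⟨span 𝕜 (range g), hB.dense_iff.2 fun U hU hne => ?_, ?_⟩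
  · exact ⟨g ⟨U, hU, hne⟩, hgU ⟨U, hU, hne⟩, subset_span (mem_range_self _)⟩
  · have hg : LinearIndependent 𝕜 (Y.mkQ ∘ g) := by rwa [show Y.mkQ ∘ g = f from funext hgf]
    simpa using (range_ker_disjoint hg).symm

end

theorem exists_isTopologicalBasis_mk_eq_tsWeight (X : Type u) [TopologicalSpace X] :
    ∃ B : Set (Set X), IsTopologicalBasis B ∧ #B = tsWeight X :=
  csInf_mem (s := {c | ∃ B : Set (Set X), IsTopologicalBasis B ∧ #B = c})
    ⟨_, _, isTopologicalBasis_opens, rfl⟩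

/-- Let `X` be a topological vector space over `𝕜` (`𝕜 = ℝ` or `ℂ`) and `Y` a
linear subspace with `w(X) ≤ codim(Y) = α`.  Then `X \ Y` is `α`-dense-lineable: there is a dense
linear subspace `Z` of `X` with `dim Z = α` and `Z ⊆ (X \ Y) ∪ {0}`. -/
theorem stmt0 {𝕜 : Type} [RCLike 𝕜] {X : Type u} [AddCommGroup X] [Module 𝕜 X]
    [TopologicalSpace X] [IsTopologicalAddGroup X] [ContinuousSMul 𝕜 X]
    (Y : Submodule 𝕜 X) (α : Cardinal.{u})
    (hcodim : Module.rank 𝕜 (X ⧸ Y) = α) (hw : tsWeight X ≤ α) :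
    ∃ Z : Submodule 𝕜 X, Dense (Z : Set X) ∧ Module.rank 𝕜 Z = α ∧
      (Z : Set X) ⊆ (Y : Set X)ᶜ ∪ {0} := by
  obtain ⟨B, hB, hBw⟩ := exists_isTopologicalBasis_mk_eq_tsWeight X
  obtain ⟨S, hS, hYS⟩ := Y.exists_dense_disjoint hB (by rw [hBw, hcodim]; exact hw)
  obtain ⟨Z, hSZ, hZY⟩ := hYS.symm.exists_isCompl
  refine ⟨Z, hS.mono hSZ, ?_, fun x hxZ => ?_⟩
  · rw [← hcodim]
    exact (quotientEquivOfIsCompl Y Z hZY.symm).rank_eq.symm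
  · by_cases hxY : x ∈ Y
    · exact Or.inr (disjoint_def.1 hZY.disjoint x hxZ hxY)
    · exact Or.inl hxY
end

section
/- Let V be an ℵ₀-dimensional real vector space with the trivial (indiscrete) topology and X := ℝ^∞ × V with the product topology. Then M := ℝ^∞ × {0} is a dense linear subspace of X, and M is the only dense linear subspace of X contained in M; that is, if Y is a linear subspace of X with Y ⊆ M and Y dense in X, then Y = M. In particular, M is ℵ₀-dense-lineable in X but not ℵ₀-infinitely ℵ₀-dense-lineable. -/
/-!
Every linear functional on `ℝ^∞` is continuous for the inductive limit topology, since its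
restriction to each `ℝⁿ` is. Hence a dense subspace of `ℝ^∞` cannot miss a vector `x`: a functional
vanishing on the subspace but not at `x` would have a closed kernel containing everything. A dense
`Y ≤ ℝ^∞ × {0}` projects onto a dense, hence full, subspace of `ℝ^∞`, so `Y = ℝ^∞ × {0}`. Density of
`ℝ^∞ × {0}` itself only uses that `{0}` is dense in the indiscrete `V`. Finally, pairwise trivially
intersecting dense subspaces inside `ℝ^∞ × {0}` would all equal it, which is not `{0}`.
-/

open Cardinal

/-- The submodule of `ℕ → ℝ` consisting of finitely supported sequences. -/
def RinfSubmodule : Submodule ℝ (ℕ → ℝ) where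
  carrier := { f | ∃ N : ℕ, ∀ n, N ≤ n → f n = 0 }
  add_mem' := by
    rintro f g ⟨N, hN⟩ ⟨M, hM⟩
    exact ⟨max N M, fun n hn => by
      simp [hN n (le_trans (le_max_left _ _) hn), hM n (le_trans (le_max_right _ _) hn)]⟩
  zero_mem' := ⟨0, fun n _ => rfl⟩
  smul_mem' := by
    rintro c f ⟨N, hN⟩
    exact ⟨N, fun n hn => by simp [hN n hn]⟩

/-- `ℝ^∞`, the space of finitely supported real sequences, as a type synonym (so that it does
not inherit the subspace topology; it will be equipped with the inductive limit topology). -/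
def Rinf : Type := RinfSubmodule

instance : AddCommGroup Rinf := inferInstanceAs (AddCommGroup RinfSubmodule)
noncomputable instance : Module ℝ Rinf := inferInstanceAs (Module ℝ RinfSubmodule)

/-- The inclusion `u_n : ℝⁿ → ℝ^∞`. -/
def uMap (n : ℕ) (x : Fin n → ℝ) : Rinf :=
  (⟨fun i => if h : i < n then x ⟨i, h⟩ else 0,
    ⟨n, fun _ hm => dif_neg (Nat.not_lt.mpr hm)⟩⟩ : RinfSubmodule)

/-- The inductive limit (final) topology on `ℝ^∞` with respect to the inclusions
`u_n : ℝⁿ → ℝ^∞`, where each `ℝⁿ` carries the Euclidean (product) topology. -/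
instance RinfTopology : TopologicalSpace Rinf :=
  ⨆ n : ℕ, TopologicalSpace.coinduced (uMap n) inferInstance

/-- The canonical basis vector `e_m` of `ℝ^∞` (`1` in coordinate `m`, `0` elsewhere). -/
noncomputable def eRinf (m : ℕ) : Rinf :=
  (⟨fun i => if i = m then 1 else 0, ⟨m + 1, fun k hk => if_neg (by omega)⟩⟩ : RinfSubmodule)

theorem Submodule.eq_top_of_dense_of_forall_continuous {K E : Type*} [DivisionRing K]
    [TopologicalSpace K] [T1Space K] [AddCommGroup E] [Module K E] [TopologicalSpace E]
    (hcont : ∀ f : Module.Dual K E, Continuous f) {p : Submodule K E} (hp : Dense (p : Set E)) :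
    p = ⊤ := by
  refine (Submodule.eq_top_iff').2 fun x => ?_
  by_contra hx
  obtain ⟨f, hfx, hpf⟩ := p.exists_dual_map_eq_bot_of_notMem hx inferInstance
  have hp_ker : (p : Set E) ⊆ f ⁻¹' {0} := fun y hy =>
    (Submodule.mem_bot K).1 (hpf ▸ Submodule.mem_map_of_mem hy)
  rw [← (isClosed_singleton.preimage (hcont f)).closure_subset_iff, hp.closure_eq] at hp_ker
  exact hfx (hp_ker (Set.mem_univ x))

theorem Submodule.eq_fst_of_le_of_map_fst_eq_top {R M N : Type*} [Semiring R]
    [AddCommMonoid M] [AddCommMonoid N] [Module R M] [Module R N] {Y : Submodule R (M × N)}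
    (hY : Y ≤ Submodule.fst R M N) (htop : Y.map (LinearMap.fst R M N) = ⊤) :
    Y = Submodule.fst R M N := by
  refine le_antisymm hY fun p hp => ?_
  obtain ⟨y, hy, hy_fst⟩ := htop ▸ Submodule.mem_top (x := p.1)
  have hy_snd : y.2 = p.2 := ((hY hy).trans hp.symm :)
  exact Prod.ext hy_fst hy_snd ▸ hy

theorem Submodule.eq_fst_of_le_of_dense {K E V : Type*} [DivisionRing K]
    [TopologicalSpace K] [T1Space K] [AddCommGroup E] [Module K E] [TopologicalSpace E]
    [AddCommGroup V] [Module K V] [TopologicalSpace V]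
    (hcont : ∀ f : Module.Dual K E, Continuous f) {Y : Submodule K (E × V)}
    (hY : Y ≤ Submodule.fst K E V) (hdense : Dense (Y : Set (E × V))) :
    Y = Submodule.fst K E V := by
  refine Submodule.eq_fst_of_le_of_map_fst_eq_top hY
    (Submodule.eq_top_of_dense_of_forall_continuous hcont ?_)
  rw [Submodule.map_coe]
  exact Prod.fst_surjective.denseRange.dense_image continuous_fst hdense

theorem Submodule.dense_fst_of_indiscreteTopology {R M N : Type*} [Semiring R]
    [AddCommMonoid M] [AddCommMonoid N] [Module R M] [Module R N] [TopologicalSpace M]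
    [TopologicalSpace N] [IndiscreteTopology N] :
    Dense (Submodule.fst R M N : Set (M × N)) := by
  have hcoe : (Submodule.fst R M N : Set (M × N)) = Set.univ ×ˢ {0} := by
    ext p
    simp [Submodule.fst]
  rw [hcoe]
  exact dense_univ.prod (dense_indiscrete (Set.singleton_nonempty 0))

def uMapLinear (n : ℕ) : (Fin n → ℝ) →ₗ[ℝ] Rinf where
  toFun := uMap n
  map_add' x y := Subtype.ext <| funext fun i => by
    show (if h : i < n then (x + y) ⟨i, h⟩ else 0)
        = (if h : i < n then x ⟨i, h⟩ else 0) + (if h : i < n then y ⟨i, h⟩ else 0)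
    split <;> simp
  map_smul' c x := Subtype.ext <| funext fun i => by
    show (if h : i < n then (c • x) ⟨i, h⟩ else 0) = c * (if h : i < n then x ⟨i, h⟩ else 0)
    split <;> simp

theorem Rinf.continuous_dual (f : Module.Dual ℝ Rinf) : Continuous f := by
  refine continuous_iSup_dom.2 fun n => continuous_coinduced_dom.2 ?_
  exact (f.comp (uMapLinear n)).continuous_of_finiteDimensional

theorem RinfSubmodule_eq_range_lcoeFun :
    RinfSubmodule = LinearMap.range (Finsupp.lcoeFun : (ℕ →₀ ℝ) →ₗ[ℝ] ℕ → ℝ) := by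
  ext g
  constructor
  · rintro ⟨N, hN⟩
    refine ⟨Finsupp.onFinset (Finset.range N) g fun n hn => ?_, rfl⟩
    by_contra hnN
    exact hn (hN n (by simpa using hnN))
  · rintro ⟨f, rfl⟩
    refine ⟨f.support.sup id + 1, fun n hn => Finsupp.notMem_support_iff.1 fun hf => ?_⟩
    have : n ≤ f.support.sup id := Finset.le_sup (f := id) hf
    omega

theorem rank_Rinf : Module.rank ℝ Rinf = ℵ₀ := by
  show Module.rank ℝ RinfSubmodule = ℵ₀
  rw [RinfSubmodule_eq_range_lcoeFun,
    rank_range_of_injective _ DFunLike.coe_injective, rank_finsupp_self', mk_nat]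

theorem stmt8_general (V : Type) [AddCommGroup V] [Module ℝ V] [tV : TopologicalSpace V]
    (htriv : tV = ⊤) :
    Dense ((Submodule.fst ℝ Rinf V : Submodule ℝ (Rinf × V)) : Set (Rinf × V)) ∧
    (∀ Y : Submodule ℝ (Rinf × V),
      (Y : Set (Rinf × V)) ⊆ (Submodule.fst ℝ Rinf V : Set (Rinf × V)) →
      Dense (Y : Set (Rinf × V)) → Y = Submodule.fst ℝ Rinf V) ∧
    (∃ Y : Submodule ℝ (Rinf × V), Dense (Y : Set (Rinf × V)) ∧
      Module.rank ℝ Y = Cardinal.aleph0 ∧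
      (Y : Set (Rinf × V)) ⊆ (Submodule.fst ℝ Rinf V : Set (Rinf × V)) ∪ {0}) ∧
    ¬ ∃ (ι : Type) (Y : ι → Submodule ℝ (Rinf × V)), Cardinal.mk ι = Cardinal.aleph0 ∧
        (∀ i, Dense ((Y i : Submodule ℝ (Rinf × V)) : Set (Rinf × V)) ∧
          Module.rank ℝ (Y i) = Cardinal.aleph0 ∧
          ((Y i : Submodule ℝ (Rinf × V)) : Set (Rinf × V)) ⊆
            (Submodule.fst ℝ Rinf V : Set (Rinf × V)) ∪ {0}) ∧
        ∀ i j, i ≠ j → Y i ⊓ Y j = ⊥ := by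
  have : IndiscreteTopology V := ⟨htriv⟩
  set M := Submodule.fst ℝ Rinf V
  have hM_dense : Dense (M : Set (Rinf × V)) := Submodule.dense_fst_of_indiscreteTopology
  have huniq : ∀ Y : Submodule ℝ (Rinf × V), (Y : Set (Rinf × V)) ⊆ M →
      Dense (Y : Set (Rinf × V)) → Y = M := fun Y hY =>
    Submodule.eq_fst_of_le_of_dense Rinf.continuous_dual hY
  have hM_union : (M : Set (Rinf × V)) ∪ {0} = M :=
    Set.union_eq_left.2 (Set.singleton_subset_iff.2 M.zero_mem)
  have hM_rank : Module.rank ℝ M = ℵ₀ := by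
    rw [(Submodule.fstEquiv ℝ Rinf V).rank_eq, rank_Rinf]
  refine ⟨hM_dense, huniq, ⟨M, hM_dense, hM_rank, Set.subset_union_left⟩, ?_⟩
  rintro ⟨ι, Y, hι, hY, hdisj⟩
  have hY_eq (i : ι) : Y i = M := huniq (Y i) (hM_union ▸ (hY i).2.2) (hY i).1
  have : Infinite ι := Cardinal.infinite_iff.2 hι.ge
  obtain ⟨i, j, hij⟩ := exists_pair_ne ι
  have hbot : M = ⊥ := by simpa [hY_eq] using hdisj i j hij
  rw [hbot, rank_bot] at hM_rank
  exact aleph0_ne_zero hM_rank.symm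

/-- Let `V` be an `ℵ₀`-dimensional real vector space with the trivial
(indiscrete) topology and `X := ℝ^∞ × V` with the product topology.  Then `M := ℝ^∞ × {0}` is a
dense linear subspace of `X` and is the only dense linear subspace of `X` contained in `M`.
In particular `M` is `ℵ₀`-dense-lineable in `X` but not `ℵ₀`-infinitely `ℵ₀`-dense-lineable. -/
theorem stmt8 (V : Type) [AddCommGroup V] [Module ℝ V] [tV : TopologicalSpace V]
    (htriv : tV = ⊤) (hV : Module.rank ℝ V = Cardinal.aleph0) :
    Dense ((Submodule.fst ℝ Rinf V : Submodule ℝ (Rinf × V)) : Set (Rinf × V)) ∧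
    (∀ Y : Submodule ℝ (Rinf × V),
      (Y : Set (Rinf × V)) ⊆ (Submodule.fst ℝ Rinf V : Set (Rinf × V)) →
      Dense (Y : Set (Rinf × V)) → Y = Submodule.fst ℝ Rinf V) ∧
    (∃ Y : Submodule ℝ (Rinf × V), Dense (Y : Set (Rinf × V)) ∧
      Module.rank ℝ Y = Cardinal.aleph0 ∧
      (Y : Set (Rinf × V)) ⊆ (Submodule.fst ℝ Rinf V : Set (Rinf × V)) ∪ {0}) ∧
    ¬ ∃ (ι : Type) (Y : ι → Submodule ℝ (Rinf × V)), Cardinal.mk ι = Cardinal.aleph0 ∧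
        (∀ i, Dense ((Y i : Submodule ℝ (Rinf × V)) : Set (Rinf × V)) ∧
          Module.rank ℝ (Y i) = Cardinal.aleph0 ∧
          ((Y i : Submodule ℝ (Rinf × V)) : Set (Rinf × V)) ⊆
            (Submodule.fst ℝ Rinf V : Set (Rinf × V)) ∪ {0}) ∧
        ∀ i j, i ≠ j → Y i ⊓ Y j = ⊥ :=
  stmt8_general V (tV := tV) htriv
end

section
/- Let X be an infinite-dimensional first-countable topological vector space over K (K = ℝ or ℂ). Then w(X) ≤ dim(X); that is, X admits a basis for its topology of cardinality at most the dimension of X. -/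
/-!
If `F` is a countable dense subfield of `𝕜` and `b` a Hamel basis of `X`, the `F`-span of `b` is
dense in `X` (its closure is a `𝕜`-submodule containing `b`) and has cardinality `dim X`. In a
first-countable topological group the translates of a countable neighbourhood basis of `0` by the
points of a dense set `D` form a basis of the topology, so `w(X) ≤ #D · ℵ₀ = dim X`.
-/

universe u v

open Cardinal

open Filter Set TopologicalSpace Uniformity

theorem tsWeight_le_mk {X : Type u} [TopologicalSpace X] {B : Set (Set X)}
    (hB : IsTopologicalBasis B) : tsWeight X ≤ #B :=
  csInf_le' ⟨B, hB, rfl⟩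

namespace UniformSpace

variable {α : Type u} [UniformSpace α] [IsCountablyGenerated (𝓤 α)]

theorem exists_isTopologicalBasis_mk_le_of_dense {s : Set α} (hs : Dense s) :
    ∃ B : Set (Set α), IsTopologicalBasis B ∧ #B ≤ #s * ℵ₀ := by
  obtain ⟨t : ℕ → SetRel α α, ht, h_basis⟩ :=
    (@uniformity_hasBasis_open_symmetric α _).exists_antitone_subbasis
  choose ht_mem hto hts using ht
  refine ⟨range fun p : s × ℕ => ball (p.1 : α) (t p.2), ?_, ?_⟩
  · refine isTopologicalBasis_of_isOpen_of_nhds ?_ fun x V hxV hVo => ?_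
    · rintro _ ⟨⟨x, k⟩, rfl⟩
      exact isOpen_ball _ (hto k)
    obtain ⟨U, hU, hUV⟩ := UniformSpace.mem_nhds_iff.1 (hVo.mem_nhds hxV)
    obtain ⟨U', hU', -, hUU'⟩ := comp_symm_of_uniformity hU
    obtain ⟨k, -, hk⟩ := h_basis.toHasBasis.mem_iff.1 hU'
    obtain ⟨y, hxy, hys⟩ := hs.inter_open_nonempty (ball x (t k)) (isOpen_ball x (hto k))
      ⟨x, mem_ball_self _ (ht_mem k)⟩
    exact ⟨_, ⟨(⟨y, hys⟩, k), rfl⟩, (t k).symm hxy,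
      fun z hz => hUV (ball_subset_of_comp_subset (hk hxy) hUU' (hk hz))⟩
  · calc #(range fun p : s × ℕ => ball (p.1 : α) (t p.2)) ≤ #(s × ℕ) := mk_range_le
      _ = #s * ℵ₀ := by simp

theorem tsWeight_le_mk_mul_aleph0 {s : Set α} (hs : Dense s) : tsWeight α ≤ #s * ℵ₀ :=
  let ⟨_, hB, hBs⟩ := exists_isTopologicalBasis_mk_le_of_dense hs
  (tsWeight_le_mk hB).trans hBs

end UniformSpace

theorem Subfield.exists_countable_dense (K : Type*) [DivisionRing K] [TopologicalSpace K]
    [SeparableSpace K] : ∃ F : Subfield K, Countable F ∧ Dense (F : Set K) := by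
  obtain ⟨Q, hQc, hQd⟩ := TopologicalSpace.exists_countable_dense K
  have : Countable Q := hQc.to_subtype
  refine ⟨Subfield.closure Q, mk_le_aleph0_iff.1 ?_, hQd.mono Subfield.subset_closure⟩
  exact (Subfield.cardinalMk_closure_le_max Q).trans (max_le mk_le_aleph0 le_rfl)

section

variable {K X : Type*} [DivisionRing K] [TopologicalSpace K] [AddCommGroup X] [Module K X]
  [TopologicalSpace X] [ContinuousAdd X] [ContinuousSMul K X]

theorem Submodule.span_subset_closure_span_of_dense (F : Subfield K) (hF : Dense (F : Set K))
    (s : Set X) : (span K s : Set X) ⊆ closure (span F s) := by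
  intro x hx
  induction hx using Submodule.span_induction with
  | mem x hx => exact subset_closure (subset_span hx)
  | zero => exact subset_closure (zero_mem _)
  | add _ _ _ _ hx hy =>
    exact map_mem_closure₂ continuous_add hx hy fun a ha b hb => add_mem ha hb
  | smul k _ _ hx =>
    exact map_mem_closure₂ continuous_smul (hF k) hx fun a ha b hb =>
      (span F s).smul_mem (⟨a, ha⟩ : F) hb

theorem Submodule.dense_span_of_dense_subfield (F : Subfield K) (hF : Dense (F : Set K))
    {s : Set X} (hs : span K s = ⊤) : Dense (span F s : Set X) := fun _ =>
  span_subset_closure_span_of_dense F hF s (hs ▸ mem_top)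

end

theorem Submodule.mk_span_range_le_of_countable (R : Type v) {X ι : Type u} [Ring R]
    [Nontrivial R] [Countable R] [AddCommGroup X] [Module R X] [Infinite ι] (v : ι → X) :
    #(span R (range v)) ≤ #ι := by
  have hR : lift.{u} #R ≤ lift.{v} #ι :=
    (lift_le_aleph0.2 mk_le_aleph0).trans (aleph0_le_lift.2 (aleph0_le_mk ι))
  have h :=
    lift_mk_le_lift_mk_of_surjective (Finsupp.linearCombination R v).surjective_rangeRestrict
  rwa [Finsupp.range_linearCombination, mk_finsupp_lift_of_infinite, lift_max, lift_lift,
    lift_lift, lift_umax, max_eq_left hR, Cardinal.lift_le] at h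

/-- Let `X` be an infinite-dimensional first-countable topological vector space
over `𝕜` (`𝕜 = ℝ` or `ℂ`).  Then `w(X) ≤ dim X`. -/
theorem stmt9 (𝕜 : Type) [RCLike 𝕜] {X : Type u} [AddCommGroup X] [Module 𝕜 X]
    [TopologicalSpace X] [IsTopologicalAddGroup X] [ContinuousSMul 𝕜 X]
    [FirstCountableTopology X] (hdim : Cardinal.aleph0 ≤ Module.rank 𝕜 X) :
    tsWeight X ≤ Module.rank 𝕜 X := by
  obtain ⟨F, hFc, hFd⟩ := Subfield.exists_countable_dense 𝕜
  let b := Module.Basis.ofVectorSpace 𝕜 X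
  have hrank : #(Module.Basis.ofVectorSpaceIndex 𝕜 X) = Module.rank 𝕜 X := b.mk_eq_rank''
  have : Infinite (Module.Basis.ofVectorSpaceIndex 𝕜 X) := infinite_iff.2 (hrank ▸ hdim)
  let _ := IsTopologicalAddGroup.rightUniformSpace X
  have := isUniformAddGroup_of_addCommGroup (G := X)
  have := IsUniformAddGroup.uniformity_countably_generated (α := X)
  calc tsWeight X ≤ #(Submodule.span F (range b)) * ℵ₀ :=
        UniformSpace.tsWeight_le_mk_mul_aleph0
          (Submodule.dense_span_of_dense_subfield F hFd b.span_eq)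
    _ ≤ Module.rank 𝕜 X * ℵ₀ := by
        gcongr
        exact hrank ▸ Submodule.mk_span_range_le_of_countable F b
    _ = Module.rank 𝕜 X := mul_aleph0_eq hdim
end

section
/- Let X be an infinite-dimensional first-countable topological vector space over K (K = ℝ or ℂ), M a subset of X, and α a cardinal with α ≥ ℵ₀. Then M is α-dense-lineable if, and only if, M is α-infinitely α-dense-lineable. -/
/-!
Let `Y` be a dense subspace of dimension `α` inside `M ∪ {0}`. Index a basis of `Y` by `A × ℕ`,
with `#A = α` and the `ℕ`-coordinate as a weight. For `κ ∈ A`, a basis vector `b` and `n ∈ ℕ`,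
perturb `b` to `b + εₙ e`, where `e` is a basis vector of larger weight, different for every
triple `(κ, b, n)`, and `εₙ ≠ 0` makes `εₙ e` lie in the `n`-th set of a countable neighbourhood
basis of `0`. The perturbations with index `κ` span a subspace `Y_κ ⊆ Y` of dimension `α` whose
closure contains every basis vector, so `Y_κ` is dense. All perturbations together are linearly
independent: in a vanishing combination, the fresh vector attached to a term of maximal weight
occurs nowhere else. Hence the `Y_κ` intersect trivially.
-/

universe u

open Cardinal
variable (𝕜 : Type) [RCLike 𝕜] {X : Type u} [AddCommGroup X] [Module 𝕜 X] [TopologicalSpace X]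

/-- `M` is `α`-dense-lineable: there is a dense linear subspace `Y` of `X` with `dim Y = α`
and `Y ⊆ M ∪ {0}`. -/
def DenseLineable (M : Set X) (α : Cardinal.{u}) : Prop :=
  ∃ Y : Submodule 𝕜 X, Dense (Y : Set X) ∧ Module.rank 𝕜 Y = α ∧ (Y : Set X) ⊆ M ∪ {0}

/-- `M` is `α`-infinitely `β`-dense-lineable: there is a family `{Y_κ}_{κ<α}` of `β`-dimensional
dense linear subspaces of `X` contained in `M ∪ {0}` with pairwise trivial intersections. -/
def InfDenseLineable (M : Set X) (α β : Cardinal.{u}) : Prop :=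
  ∃ (ι : Type u) (Y : ι → Submodule 𝕜 X), #ι = α ∧
    (∀ i, Dense (Y i : Set X) ∧ Module.rank 𝕜 (Y i) = β ∧ (Y i : Set X) ⊆ M ∪ {0}) ∧
    ∀ i j, i ≠ j → Y i ⊓ Y j = ⊥

open Filter Set Topology Function

theorem LinearIndependent.add_smul_of_lt {R M ι κ β : Type*} [Ring R] [NoZeroDivisors R]
    [AddCommGroup M] [Module R M] [LinearOrder β] {b : ι → M} (hb : LinearIndependent R b)
    {t s : κ → ι} (hs : Injective s) {w : ι → β} (hw : ∀ k, w (t k) < w (s k))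
    {c : κ → R} (hc : ∀ k, c k ≠ 0) :
    LinearIndependent R fun k => b (t k) + c k • b (s k) := by
  classical
  rw [linearIndependent_iff]
  intro l hl
  by_contra hl0
  set μ : ι →₀ R := l.sum fun k a => Finsupp.single (t k) a + Finsupp.single (s k) (a * c k)
  have hμ : Finsupp.linearCombination R b μ = 0 := by
    rw [map_finsuppSum, ← hl, Finsupp.linearCombination_apply]
    refine Finset.sum_congr rfl fun k _ => ?_
    simp only [map_add, Finsupp.linearCombination_single, smul_add, smul_smul]
  -- the top-weight index `k₀` is the only one contributing to the coordinate `s k₀` of `μ`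
  obtain ⟨k₀, hk₀, hk₀max⟩ :=
    l.support.exists_max_image (fun k => w (t k)) (Finsupp.support_nonempty_iff.mpr hl0)
  have hμk₀ : μ (s k₀) = l k₀ * c k₀ := by
    rw [Finsupp.sum_apply, Finsupp.sum, Finset.sum_eq_single_of_mem k₀ hk₀]
    · have ht₀ : t k₀ ≠ s k₀ := fun h => (hw k₀).ne (congrArg w h)
      simp [ht₀]
    · intro k hk hne
      have htk : t k ≠ s k₀ := fun h => (hk₀max k hk).not_gt (h ▸ hw k₀)
      simp [htk, hs.ne hne]
  rw [linearIndependent_iff.mp hb μ hμ, Finsupp.coe_zero, Pi.zero_apply, eq_comm,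
    mul_eq_zero] at hμk₀
  exact hμk₀.elim (Finsupp.mem_support_iff.mp hk₀) (hc k₀)

theorem LinearIndependent.disjoint_span_range_of_uncurry {R M A J : Type*} [Ring R]
    [AddCommGroup M] [Module R M] {v : A → J → M} (hv : LinearIndependent R (uncurry v))
    {a a' : A} (h : a ≠ a') :
    Disjoint (Submodule.span R (range (v a))) (Submodule.span R (range (v a'))) := by
  have hrange : ∀ a, range (v a) = uncurry v '' {q | q.1 = a} := by
    intro a
    ext x
    simp [eq_comm]
  rw [hrange, hrange]
  exact hv.disjoint_span_image (Set.disjoint_left.mpr fun q h₁ h₂ => h (h₁.symm.trans h₂))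

theorem exists_injective_snd_lt (ι : Type*) [Infinite ι] :
    ∃ s : ι × (ι × ℕ) × ℕ → ι × ℕ, Injective s ∧ ∀ q, q.2.1.2 < (s q).2 := by
  obtain ⟨σ⟩ : Nonempty (ι × ι × ℕ ≃ ι) := Cardinal.eq.mp <| by
    simp [mul_aleph0_eq (aleph0_le_mk ι), mul_eq_self (aleph0_le_mk ι)]
  refine ⟨fun q => (σ (q.1, q.2.1.1, q.2.2), q.2.1.2 + 1), ?_, fun q => Nat.lt_succ_self _⟩
  rintro ⟨a, ⟨i, m⟩, n⟩ ⟨a', ⟨i', m'⟩, n'⟩ h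
  simp only [Prod.mk.injEq, σ.injective.eq_iff, Nat.add_right_cancel_iff] at h
  obtain ⟨⟨rfl, rfl, rfl⟩, rfl⟩ := h
  rfl

section
variable {K E : Type*} [NontriviallyNormedField K] [AddCommGroup E] [Module K E]
  [TopologicalSpace E] [ContinuousSMul K E]

theorem exists_ne_zero_smul_mem (x : E) {U : Set E} (hU : U ∈ 𝓝 0) :
    ∃ c : K, c ≠ 0 ∧ c • x ∈ U := by
  have hx : Tendsto (fun c : K => c • x) (𝓝[≠] 0) (𝓝 0) :=
    ((continuous_id.smul continuous_const).tendsto' 0 0 (zero_smul K x)).mono_left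
      nhdsWithin_le_nhds
  exact ((eventually_mem_nhdsWithin (a := (0 : K))).and (hx hU)).exists

theorem exists_ne_zero_tendsto_smul_nhds_zero [FirstCountableTopology E] (x : ℕ → E) :
    ∃ c : ℕ → K, (∀ n, c n ≠ 0) ∧ Tendsto (fun n => c n • x n) atTop (𝓝 0) := by
  obtain ⟨U, hU⟩ := (𝓝 (0 : E)).exists_antitone_basis
  choose c hc0 hcU using fun n => exists_ne_zero_smul_mem (K := K) (x n) (hU.mem n)
  exact ⟨c, hc0, hU.tendsto hcU⟩

theorem exists_linearIndependent_tendsto [ContinuousAdd E] [FirstCountableTopology E]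
    {A I : Type*} {b : I → E} (hb : LinearIndependent K b)
    {w : I → ℕ} {s : A × I × ℕ → I} (hs : Injective s) (hw : ∀ q, w q.2.1 < w (s q)) :
    ∃ v : A → I × ℕ → E, LinearIndependent K (uncurry v) ∧
      (∀ a q, v a q ∈ Submodule.span K (range b)) ∧
      ∀ a i, Tendsto (fun n => v a (i, n)) atTop (𝓝 (b i)) := by
  choose c hc0 hc using fun (a : A) (i : I) =>
    exists_ne_zero_tendsto_smul_nhds_zero (K := K) fun n => b (s (a, i, n))
  refine ⟨fun a q => b q.1 + c a q.1 q.2 • b (s (a, q)), ?_, fun a q => ?_,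
    fun a i => by simpa using tendsto_const_nhds.add (hc a i)⟩
  · exact (hb.add_smul_of_lt (t := fun q => q.2.1) (c := fun q => c q.1 q.2.1 q.2.2) hs hw
      fun q => hc0 _ _ _ :)
  · exact add_mem (Submodule.subset_span ⟨_, rfl⟩)
      (Submodule.smul_mem _ _ (Submodule.subset_span ⟨_, rfl⟩))

theorem Submodule.exists_pairwise_disjoint_rank_eq_le_topologicalClosure [ContinuousAdd E]
    [FirstCountableTopology E] (Y : Submodule K E) (hY : ℵ₀ ≤ Module.rank K Y) :
    ∃ (ι : Type _) (Z : ι → Submodule K E), #ι = Module.rank K Y ∧ Pairwise (Disjoint on Z) ∧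
      ∀ i, Z i ≤ Y ∧ Y ≤ (Z i).topologicalClosure ∧ Module.rank K (Z i) = Module.rank K Y := by
  obtain ⟨B, -, hBY, hB⟩ := exists_linearIndependent K (Y : Set E)
  rw [span_eq] at hBY
  have hBrank : #B = Module.rank K Y := by
    rw [← hBY, rank_span_set hB]
  have : Infinite B := infinite_iff.mpr (hBrank ▸ hY)
  obtain ⟨e⟩ : Nonempty (B × ℕ ≃ B) := Cardinal.eq.mp <| by
    simp [mul_aleph0_eq (aleph0_le_mk B)]
  have hb : LinearIndependent K ((↑) ∘ e : B × ℕ → E) := hB.comp e e.injective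
  have hbY : span K (range ((↑) ∘ e : B × ℕ → E)) = Y := by
    rw [EquivLike.range_comp, Subtype.range_coe, hBY]
  obtain ⟨s, hs, hw⟩ := exists_injective_snd_lt B
  obtain ⟨v, hv, hvY, hvb⟩ := exists_linearIndependent_tendsto hb (w := Prod.snd) hs hw
  rw [hbY] at hvY
  refine ⟨B, fun a => span K (range (v a)), hBrank,
    fun a a' h => hv.disjoint_span_range_of_uncurry h,
    fun a => ⟨span_le.mpr (range_subset_iff.mpr (hvY a)), ?_, ?_⟩⟩
  · rw [← hbY, span_le]
    rintro _ ⟨i, rfl⟩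
    exact mem_closure_of_tendsto (hvb a i) (.of_forall fun n => subset_span ⟨_, rfl⟩)
  · have hva : LinearIndependent K (v a) := hv.comp (Prod.mk a) (Prod.mk_right_injective a)
    rw [rank_span hva, mk_range_eq _ hva.injective, ← hBrank]
    simp [mul_aleph0_eq (aleph0_le_mk B)]
end

theorem stmt10 [IsTopologicalAddGroup X] [ContinuousSMul 𝕜 X] [FirstCountableTopology X]
    (M : Set X) (α : Cardinal.{u})
    (hα : Cardinal.aleph0 ≤ α) :
    DenseLineable 𝕜 M α ↔ InfDenseLineable 𝕜 M α α := by
  constructor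
  · rintro ⟨Y, hYd, rfl, hYM⟩
    obtain ⟨ι, Z, hι, hZ, hZY⟩ := Y.exists_pairwise_disjoint_rank_eq_le_topologicalClosure hα
    refine ⟨ι, Z, hι, fun i => ⟨?_, (hZY i).2.2, fun x hx => hYM ((hZY i).1 hx)⟩,
      fun i j h => (hZ h).eq_bot⟩
    exact dense_closure.mp (hYd.mono (hZY i).2.1)
  · rintro ⟨ι, Y, hι, hY, -⟩
    obtain ⟨i⟩ : Nonempty ι := mk_ne_zero_iff.mp (hι ▸ (aleph0_pos.trans_le hα).ne')
    exact ⟨Y i, hY i⟩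
end

section
/- Let X be an infinite-dimensional first-countable topological vector space over K (K = ℝ or ℂ), M a subset of X, and α a cardinal with α ≥ ℵ₀. Then M is pointwise α-dense-lineable if, and only if, M is α-infinitely pointwise α-dense-lineable. -/
/-! Fix `x ∈ M` and a dense subspace `Y ∋ x` of dimension `α`, and choose a basis of `Y` made of
`{x} \ {0}` and vectors `e (a, n)`, `(a, n) ∈ A × ℕ`, `#A = α`; call `n` the level of `e (a, n)`.
With `ρ : A × (A × ℕ) × ℕ ≃ A`, let `Y i` (`i ∈ A`) be spanned by `x` and the vectors
`e p + c (i, p, m) • e (ρ (i, p, m), p.2 + 1)`. First countability lets us choose the scalars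
`c ≠ 0` so that the perturbations tend to `0` as `m → ∞`; then every basis vector lies in the
closure of `Y i`, so `Y i` is dense. Each perturbing vector sits one level above the vector it
perturbs and is used only once, so the whole family is triangular, hence linearly independent, and
`Y i`, `Y j` are spanned by subfamilies sharing only `x`: `Y i ⊓ Y j = span {x}`. -/

universe u

open Cardinal
variable (𝕜 : Type) [RCLike 𝕜] {X : Type u} [AddCommGroup X] [Module 𝕜 X] [TopologicalSpace X]

/-- `M` is pointwise `α`-dense-lineable: for each `x ∈ M` there is a dense linear subspace `Y`
of `X` with `dim Y = α` and `x ∈ Y ⊆ M ∪ {0}`. -/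
def PointwiseDenseLineable (M : Set X) (α : Cardinal.{u}) : Prop :=
  ∀ x ∈ M, ∃ Y : Submodule 𝕜 X, x ∈ Y ∧ Dense (Y : Set X) ∧ Module.rank 𝕜 Y = α ∧
    (Y : Set X) ⊆ M ∪ {0}

/-- `M` is `α`-infinitely pointwise `β`-dense-lineable: for each `x ∈ M` there is a family
`{Y_κ}_{κ<α}` of `β`-dimensional dense linear subspaces with `x ∈ Y_κ ⊆ M ∪ {0}` and
`Y_{κ₁} ∩ Y_{κ₂} = span {x}` whenever `κ₁ ≠ κ₂`. -/
def InfPointwiseDenseLineable (M : Set X) (α β : Cardinal.{u}) : Prop :=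
  ∀ x ∈ M, ∃ (ι : Type u) (Y : ι → Submodule 𝕜 X), #ι = α ∧
    (∀ i, x ∈ Y i ∧ Dense (Y i : Set X) ∧ Module.rank 𝕜 (Y i) = β ∧ (Y i : Set X) ⊆ M ∪ {0}) ∧
    ∀ i j, i ≠ j → Y i ⊓ Y j = Submodule.span 𝕜 {x}

open Filter Topology Set Function Submodule

theorem Finsupp.linearIndependent_of_injective_lead {R ι J β : Type*} [Ring R] [NoZeroDivisors R]
    [LinearOrder β] (v : ι → J →₀ R) (lead : ι → J) (deg : J → β) (hinj : Injective lead)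
    (hlead : ∀ i, v i (lead i) ≠ 0)
    (hdeg : ∀ i j, v i j ≠ 0 → j ≠ lead i → deg j < deg (lead i)) :
    LinearIndependent R v := by
  classical
  rw [linearIndependent_iff']
  intro s l hsum
  by_contra! hne
  obtain ⟨i, hi, hmax⟩ := (s.filter (l · ≠ 0)).exists_max_image (deg ∘ lead)
    (by simpa [Finset.filter_nonempty_iff] using hne)
  rw [Finset.mem_filter] at hi
  have hcoeff : (∑ i' ∈ s, l i' • v i') (lead i) = l i * v i (lead i) := by
    rw [Finset.sum_apply', Finset.sum_eq_single_of_mem i hi.1]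
    · rfl
    intro i' hi' hi'i
    by_cases hl : l i' = 0
    · simp [hl]
    by_contra hv
    have := hdeg i' (lead i) (right_ne_zero_of_mul (by simpa using hv))
      (fun h => hi'i (hinj h).symm)
    exact (this.trans_le (hmax i' (Finset.mem_filter.2 ⟨hi', hl⟩))).false
  rw [hsum, Finsupp.zero_apply, eq_comm, mul_eq_zero] at hcoeff
  exact hcoeff.elim hi.2 (hlead i)

theorem LinearIndependent.span_image_inf_span_image {R M ι : Type*} [Ring R] [AddCommGroup M]
    [Module R M] {v : ι → M} (hv : LinearIndependent R v) (s t : Set ι) :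
    span R (v '' s) ⊓ span R (v '' t) = span R (v '' (s ∩ t)) := by
  simp only [Finsupp.span_image_eq_map_linearCombination, Finsupp.supported_inter,
    Submodule.map_inf _ hv]

theorem exists_ne_zero_smul_tendsto_zero {𝕜 X : Type*} [NontriviallyNormedField 𝕜]
    [AddCommMonoid X] [Module 𝕜 X] [TopologicalSpace X] [ContinuousSMul 𝕜 X]
    [FirstCountableTopology X] (v : ℕ → X) :
    ∃ c : ℕ → 𝕜, (∀ n, c n ≠ 0) ∧ Tendsto (fun n => c n • v n) atTop (𝓝 0) := by
  obtain ⟨U, hU⟩ := (𝓝 (0 : X)).exists_antitone_basis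
  have hsmall : ∀ n, ∃ c : 𝕜, c ≠ 0 ∧ c • v n ∈ U n := fun n =>
    have hU : ∀ᶠ c in 𝓝[≠] (0 : 𝕜), c • v n ∈ U n := nhdsWithin_le_nhds <|
      (continuous_id.smul continuous_const).tendsto' 0 0 (zero_smul _ _) (hU.mem n)
    ((eventually_mem_nhdsWithin (a := 0)).and hU).exists
  choose c hc0 hcU using hsmall
  exact ⟨c, hc0, hU.tendsto hcU⟩

section Perturbation

variable {R M K A : Type*}

/-- The index `q = (i, p, m)` stands for the `m`-th generator of the `i`-th subspace: `E p`
perturbed by a vector of level `p.2 + 1`. -/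
def perturbedFamily [Semiring R] [AddCommMonoid M] [Module R M] (E : K ⊕ A × ℕ → M)
    (ρ : A × (A × ℕ) × ℕ → A) (c : A × (A × ℕ) × ℕ → R) : K ⊕ A × (A × ℕ) × ℕ → M :=
  Sum.elim (E ∘ Sum.inl) fun q => E (.inr q.2.1) + c q • E (.inr (ρ q, q.2.1.2 + 1))

theorem perturbedFamily_mem_span [Semiring R] [AddCommMonoid M] [Module R M]
    (E : K ⊕ A × ℕ → M) (ρ : A × (A × ℕ) × ℕ → A) (c : A × (A × ℕ) × ℕ → R)
    (o : K ⊕ A × (A × ℕ) × ℕ) :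
    perturbedFamily E ρ c o ∈ span R (range E) := by
  rcases o with k | q
  · exact subset_span ⟨_, rfl⟩
  · exact add_mem (subset_span ⟨_, rfl⟩) (smul_mem _ _ (subset_span ⟨_, rfl⟩))

theorem linearIndependent_perturbedFamily [Ring R] [IsDomain R] [AddCommGroup M]
    [Module R M] {E : K ⊕ A × ℕ → M} (hE : LinearIndependent R E)
    {ρ : A × (A × ℕ) × ℕ → A} (hρ : Injective ρ) {c : A × (A × ℕ) × ℕ → R}
    (hc : ∀ q, c q ≠ 0) : LinearIndependent R (perturbedFamily E ρ c) := by
  classical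
  have hlevel (q : A × (A × ℕ) × ℕ) : q.2.1 ≠ (ρ q, q.2.1.2 + 1) := fun h => by
    simpa using congrArg Prod.snd h
  have hsingle := Finsupp.linearIndependent_of_injective_lead
    (perturbedFamily (fun j : K ⊕ A × ℕ => Finsupp.single j (1 : R)) ρ c)
    (Sum.elim Sum.inl fun q => .inr (ρ q, q.2.1.2 + 1)) (Sum.elim 0 fun p => p.2) ?_ ?_ ?_
  · convert hsingle.map' _ (LinearMap.ker_eq_bot.2 hE)
    ext (k | q) <;> simp [perturbedFamily]
  · rintro (k | q) (k' | q') h <;> simp_all [hρ.eq_iff]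
  · rintro (k | q) <;> simp [perturbedFamily, hlevel, hc]
  · rintro (k | q) (k' | p) hj hne
    · simp_all [perturbedFamily, Finsupp.single_apply]
    · simp [perturbedFamily] at hj
    · simp [perturbedFamily] at hj
    · obtain rfl : q.2.1 = p := by
        by_contra hp
        simp [perturbedFamily, Finsupp.single_apply, hp] at hj
        exact hne (congrArg Sum.inr hj.1.symm)
      simp

end Perturbation

theorem Submodule.dense_of_subset_closure {R M : Type*} [Semiring R] [TopologicalSpace M]
    [AddCommMonoid M] [Module R M] [ContinuousConstSMul R M] [ContinuousAdd M] {s : Set M}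
    (hs : Dense (span R s : Set M)) {Z : Submodule R M} (hsZ : s ⊆ closure Z) :
    Dense (Z : Set M) := by
  refine (hs.mono ?_).of_closure
  rw [← topologicalClosure_coe]
  exact span_le.2 (by rwa [topologicalClosure_coe])

theorem Submodule.exists_linearIndependent_sum_span_eq {K : Type*} {V : Type u} [DivisionRing K]
    [AddCommGroup V] [Module K V] (Y : Submodule K V) {x : V} (hx : x ∈ Y) {A : Type u}
    [Infinite A] (hY : Module.rank K Y = #A) :
    ∃ (S : Type u) (E : S ⊕ A × ℕ → V), LinearIndependent K E ∧ span K (range E) = Y ∧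
      span K (range (E ∘ Sum.inl)) = span K {x} := by
  classical
  set s : Set V := {x} \ {0}
  have hs : LinearIndepOn K id s := by
    by_cases hx0 : x = 0
    · simp [s, hx0]
    · have hsx : s = {x} := sdiff_singleton_eq_self (by simpa using Ne.symm hx0)
      simpa [hsx] using hx0
  obtain ⟨b, hbsub, hsb, hYb, hb⟩ :=
    exists_linearIndepOn_id_extension hs (sdiff_subset.trans (singleton_subset_iff.2 hx))
  have hbY : span K b = Y := le_antisymm (span_le.2 hbsub) fun z hz => hYb hz
  have hdiff : #(b \ s : Set V) = #(A × ℕ) := by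
    have hbcard : #b = #A := by rw [← rank_span_set hb, hbY, hY]
    have hslt : #s < #b := calc
      #s ≤ 1 := mk_le_one_iff_set_subsingleton.2 (subsingleton_singleton.anti sdiff_subset)
      _ < ℵ₀ := one_lt_aleph0
      _ ≤ #b := hbcard ▸ aleph0_le_mk A
    rw [eq_of_add_eq_of_aleph0_le ((add_comm _ _).trans (mk_sdiff_add_mk hsb)) hslt
      (hbcard ▸ aleph0_le_mk A), hbcard]
    simp [mk_prod, aleph0_le_mk]
  obtain ⟨e⟩ : Nonempty (↥(b \ s) ≃ A × ℕ) := Cardinal.eq.1 hdiff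
  let φ : s ⊕ A × ℕ ≃ b :=
    (Equiv.sumCongr (Equiv.refl s) e.symm).trans (Equiv.Set.sumDiffSubset hsb)
  refine ⟨s, Subtype.val ∘ φ, hb.comp φ φ.injective, ?_, ?_⟩
  · rw [φ.surjective.range_comp, Subtype.range_coe, hbY]
  · have hφ : (Subtype.val ∘ φ) ∘ Sum.inl = ((↑) : s → V) := funext fun k => by simp [φ]
    rw [hφ, Subtype.range_coe, span_sdiff_singleton_zero]

theorem exists_submodules_inf_eq_span_inl {𝕜 : Type*} [NontriviallyNormedField 𝕜] {X : Type u}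
    [AddCommGroup X] [Module 𝕜 X] [TopologicalSpace X] [ContinuousAdd X] [ContinuousSMul 𝕜 X]
    [FirstCountableTopology X] {K A : Type u} [Infinite A] {E : K ⊕ A × ℕ → X}
    (hE : LinearIndependent 𝕜 E) :
    ∃ Y : A → Submodule 𝕜 X,
      (∀ i, span 𝕜 (range (E ∘ Sum.inl)) ≤ Y i ∧ Y i ≤ span 𝕜 (range E) ∧
        range E ⊆ closure (Y i) ∧ #A ≤ Module.rank 𝕜 (Y i)) ∧
      Pairwise fun i j => Y i ⊓ Y j = span 𝕜 (range (E ∘ Sum.inl)) := by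
  obtain ⟨ρ⟩ : Nonempty (A × (A × ℕ) × ℕ ≃ A) := Cardinal.eq.1 <| by
    simp [mk_prod, mul_eq_left, aleph0_le_mk]
  have hsmall (ip : A × (A × ℕ)) : ∃ c : ℕ → 𝕜, (∀ m, c m ≠ 0) ∧
      Tendsto (fun m => c m • E (.inr (ρ (ip.1, ip.2, m), ip.2.2 + 1))) atTop (𝓝 0) :=
    exists_ne_zero_smul_tendsto_zero _
  choose C hC0 hC using hsmall
  set F := perturbedFamily E ρ fun q => C (q.1, q.2.1) q.2.2
  have hF : LinearIndependent 𝕜 F :=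
    linearIndependent_perturbedFamily hE ρ.injective fun _ => hC0 _ _
  set T : A → Set (K ⊕ A × (A × ℕ) × ℕ) := fun i => range Sum.inl ∪ Sum.inr '' {q | q.1 = i}
  have hFinl : F '' range Sum.inl = range (E ∘ Sum.inl) := (range_comp F Sum.inl).symm
  refine ⟨fun i => span 𝕜 (F '' T i), fun i => ⟨?_, ?_, ?_, ?_⟩, fun i j hij => ?_⟩
  · exact span_mono (hFinl ▸ image_mono subset_union_left)
  · exact span_le.2 (image_subset_iff.2 fun o _ => perturbedFamily_mem_span E ρ _ o)
  · rintro _ ⟨k | p, rfl⟩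
    · exact subset_closure (subset_span ⟨.inl k, .inl ⟨k, rfl⟩, rfl⟩)
    · refine mem_closure_of_tendsto (add_zero (E (.inr p)) ▸ tendsto_const_nhds.add (hC (i, p)))
        (Eventually.of_forall fun m => subset_span ⟨.inr (i, p, m), .inr ⟨_, rfl, rfl⟩, rfl⟩)
  · let f (r : (A × ℕ) × ℕ) : span 𝕜 (F '' T i) :=
      ⟨F (.inr (i, r)), subset_span ⟨_, .inr ⟨_, rfl, rfl⟩, rfl⟩⟩
    have hf : LinearIndependent 𝕜 f := .of_comp (span 𝕜 (F '' T i)).subtype <|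
      hF.comp (fun r => .inr (i, r)) fun r r' h => by simpa using h
    calc #A = #((A × ℕ) × ℕ) := by simp [mk_prod, aleph0_le_mk]
      _ ≤ _ := hf.cardinal_le_rank
  · have hT : T i ∩ T j = range Sum.inl := by
      ext (k | q) <;> simp [T]
      exact fun hi hj => hij (hi.symm.trans hj)
    dsimp only
    rw [hF.span_image_inf_span_image, hT, hFinl]

theorem stmt11 [IsTopologicalAddGroup X] [ContinuousSMul 𝕜 X] [FirstCountableTopology X]
    (M : Set X) (α : Cardinal.{u}) (hα : Cardinal.aleph0 ≤ α) :
    PointwiseDenseLineable 𝕜 M α ↔ InfPointwiseDenseLineable 𝕜 M α α := by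
  have : Infinite α.out := Cardinal.infinite_iff.2 (by rwa [mk_out α])
  refine ⟨fun h x hxM => ?_, fun h x hxM => ?_⟩
  · obtain ⟨Y, hxY, hYd, hYr, hYM⟩ := h x hxM
    obtain ⟨S, E, hE, hEY, hEx⟩ :=
      Y.exists_linearIndependent_sum_span_eq hxY (hYr.trans (mk_out α).symm)
    obtain ⟨Z, hZ, hZinf⟩ := exists_submodules_inf_eq_span_inl hE
    refine ⟨α.out, Z, mk_out α, fun i => ?_, fun i j hij => (hZinf hij).trans hEx⟩
    obtain ⟨hxZ, hZY, hEZ, hZr⟩ := hZ i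
    rw [hEY] at hZY
    exact ⟨hxZ (hEx ▸ mem_span_singleton_self x), dense_of_subset_closure (hEY ▸ hYd) hEZ,
      le_antisymm (hYr ▸ rank_mono hZY) (mk_out α ▸ hZr), fun z hz => hYM (hZY hz)⟩
  · obtain ⟨ι, Y, hι, hY, -⟩ := h x hxM
    have : Nonempty ι := mk_ne_zero_iff.1 (hι ▸ (aleph0_pos.trans_le hα).ne')
    exact ⟨Y (Classical.arbitrary ι), hY _⟩
end

section
/- Let X be a commutative free algebra over K (K = ℝ or ℂ) with set of free generators A, let S ⊆ A, let R ⊆ ⟨S⟩ be a set of free generators, and let x ∈ X \ ⟨S⟩. Then R ∪ {x} is a set of free generators. -/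
universe u

open Cardinal

variable (𝕜 : Type) [RCLike 𝕜] {X : Type} [NonUnitalCommRing X] [Module 𝕜 X]
  [SMulCommClass 𝕜 X X] [IsScalarTower 𝕜 X X]

/-- `S` is a set of free generators (SFG): for every `n`, every nonzero polynomial `P` in `n`
variables with no constant term and all pairwise distinct `x₁, …, x_n ∈ S` one has
`P(x₁, …, x_n) ≠ 0`.  (The evaluation of a polynomial with no constant term at elements of the
non-unital algebra `X` is performed inside the unitization of `X`, where it lands in the copy
of `X`.) -/
def IsSFG (S : Set X) : Prop :=
  ∀ (n : ℕ) (x : Fin n → X), (∀ i, x i ∈ S) → Function.Injective x →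
    ∀ P : MvPolynomial (Fin n) 𝕜, P ≠ 0 → MvPolynomial.constantCoeff P = 0 →
      MvPolynomial.aeval (fun i => (x i : Unitization 𝕜 X)) P ≠ 0

/-!
Evaluating polynomials in the unitization `K ⊕ X` turns a set of free generators into an
algebraically independent set, and the free generators `A` identify `K ⊕ X` with the
polynomial ring on `A`. Under this identification `⟨S⟩` becomes the polynomials supported on
`S`. A polynomial `p` outside it involves some variable `X a` with `a ∉ S`, so it has positive
degree as a polynomial in `X a` over the other variables and is transcendental over
`⟨S⟩ ⊇ ⟨R⟩`; adjoining a transcendental element to an algebraically independent set keeps it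
independent.
-/

namespace MvPolynomial

variable {σ R : Type*} [CommRing R] [IsDomain R]

theorem transcendental_supported_compl_singleton {i : σ} {p : MvPolynomial σ R}
    (hp : i ∈ p.vars) : Transcendental (supported R ({i}ᶜ : Set σ)) p := by
  set B := supported R ({i}ᶜ : Set σ)
  -- `T ↦ X i` identifies `B[T]` with `MvPolynomial σ R`, and `p` has positive degree in `T`.
  set φ := Polynomial.aeval (R := B) (X i : MvPolynomial σ R)
  have hinj : Function.Injective φ :=
    transcendental_iff_injective.mp (transcendental_supported_X R (by simp))
  have hsurj : Function.Surjective φ := by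
    have hrange : (φ.restrictScalars R).range = ⊤ := by
      rw [eq_top_iff, ← adjoin_range_X, Algebra.adjoin_le_iff]
      rintro _ ⟨j, rfl⟩
      by_cases hj : j = i
      · exact ⟨Polynomial.X, by simp [φ, hj]⟩
      · exact ⟨Polynomial.C ⟨X j, Algebra.subset_adjoin ⟨j, hj, rfl⟩⟩, by simp [φ]⟩
    exact fun q ↦ hrange.ge (Algebra.mem_top (x := q))
  set e := AlgEquiv.ofBijective φ ⟨hinj, hsurj⟩
  have hdeg : (e.symm p).natDegree ≠ 0 := by
    intro h0
    obtain ⟨b, hb⟩ := Polynomial.natDegree_eq_zero.mp h0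
    have hpb : p = b := by rw [← e.apply_symm_apply p, ← hb]; exact Polynomial.aeval_C _ _
    have hi : i ∈ ({i}ᶜ : Set σ) := mem_supported.mp (hpb ▸ b.2) hp
    exact hi rfl
  have hlead : (e.symm p).leadingCoeff ∈ nonZeroDivisors B :=
    mem_nonZeroDivisors_of_ne_zero <|
      Polynomial.leadingCoeff_ne_zero.mpr fun h ↦ hdeg (by simp [h])
  have htr := Polynomial.transcendental _ hdeg hlead
  rwa [Transcendental, ← isAlgebraic_algHom_iff e.toAlgHom e.injective, AlgEquiv.coe_toAlgHom,
    e.apply_symm_apply] at htr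

theorem transcendental_supported_of_notMem {s : Set σ} {p : MvPolynomial σ R}
    (hp : p ∉ supported R s) : Transcendental (supported R s) p := by
  obtain ⟨i, hip, his⟩ := Set.not_subset.mp (mt mem_supported.mpr hp)
  exact (transcendental_supported_compl_singleton hip).of_tower_top_of_subalgebra_le
    (supported_mono (by simpa using his))

end MvPolynomial

open MvPolynomial

section Transcendental

variable {ι R A : Type*} [CommRing R] [IsDomain R] [CommRing A] [Algebra R A] {v : ι → A}

theorem AlgebraicIndependent.transcendental_adjoin_image_of_notMem
    (hv : AlgebraicIndependent R v) (htop : Algebra.adjoin R (Set.range v) = ⊤)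
    {s : Set ι} {a : A} (ha : a ∉ Algebra.adjoin R (v '' s)) :
    Transcendental (Algebra.adjoin R (v '' s)) a := by
  -- Pull `a` back along the isomorphism `aeval v` and use the polynomial case.
  obtain ⟨q, rfl⟩ : ∃ q, aeval v q = a := by
    rw [Algebra.adjoin_range_eq_range_aeval] at htop
    exact htop.ge (Algebra.mem_top (x := a))
  have himage : aeval v '' (X '' s : Set (MvPolynomial ι R)) = v '' s := by
    rw [Set.image_image]; simp
  have hq : q ∉ supported R s := fun hq ↦ ha <| by
    rw [← himage, ← AlgHom.map_adjoin]
    exact Subalgebra.mem_map.mpr ⟨q, hq, rfl⟩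
  have hXs : AlgebraicIndependent R (fun j : s ↦ (X j : MvPolynomial ι R)) :=
    (algebraicIndependent_X ι R).comp _ Subtype.val_injective
  have hqs := (hXs.option_iff_transcendental q).mpr <| by
    rw [← Set.image_eq_range]
    exact transcendental_supported_of_notMem hq
  have hmap := hqs.map' hv
  have hvs : AlgebraicIndependent R (fun j : s ↦ v j) := hv.comp _ Subtype.val_injective
  rw [Set.image_eq_range, ← hvs.option_iff_transcendental]
  convert hmap using 1
  ext (_ | _) <;> simp

theorem AlgebraicIndepOn.transcendental_adjoin_image_of_notMem {t s : Set ι}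
    (hv : AlgebraicIndepOn R v t) (htop : Algebra.adjoin R (v '' t) = ⊤) (hst : s ⊆ t)
    {a : A} (ha : a ∉ Algebra.adjoin R (v '' s)) :
    Transcendental (Algebra.adjoin R (v '' s)) a := by
  have hs : (fun i : t ↦ v i) '' (Subtype.val ⁻¹' s) = v '' s := by
    rw [← Set.image_image (g := v), Subtype.image_preimage_coe, Set.inter_eq_right.mpr hst]
  rw [← hs] at ha ⊢
  exact AlgebraicIndependent.transcendental_adjoin_image_of_notMem hv
    (by rwa [← Set.image_eq_range]) ha

end Transcendental

namespace Unitization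

variable {R A : Type*} [CommSemiring R]

section Semiring

variable [NonUnitalSemiring A] [Module R A] [SMulCommClass R A A] [IsScalarTower R A A]

theorem inr_mem_adjoin_image_inr_iff {s : Set A} {a : A} :
    (a : Unitization R A) ∈ Algebra.adjoin R ((↑) '' s) ↔
      a ∈ NonUnitalAlgebra.adjoin R s := by
  refine ⟨fun ha ↦ ?_, fun ha ↦ ?_⟩
  · suffices ∀ u ∈ Algebra.adjoin R ((↑) '' s),
        (u : Unitization R A).snd ∈ NonUnitalAlgebra.adjoin R s from snd_inr R a ▸ this _ ha
    intro u hu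
    induction hu using Algebra.adjoin_induction with
    | mem _ h => obtain ⟨b, hb, rfl⟩ := h; exact NonUnitalAlgebra.subset_adjoin R hb
    | algebraMap r => rw [algebraMap_eq_inl, snd_inl]; exact zero_mem _
    | add _ _ _ _ hu hv => rw [snd_add]; exact add_mem hu hv
    | mul _ _ _ _ hu hv =>
      rw [snd_mul]
      exact add_mem (add_mem (SMulMemClass.smul_mem _ hv) (SMulMemClass.smul_mem _ hu))
        (mul_mem hu hv)
  · induction ha using NonUnitalAlgebra.adjoin_induction with
    | mem b hb => exact Algebra.subset_adjoin ⟨b, hb, rfl⟩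
    | add _ _ _ _ hb hc => rw [inr_add]; exact add_mem hb hc
    | zero => rw [inr_zero]; exact zero_mem _
    | mul _ _ _ _ hb hc => rw [inr_mul]; exact mul_mem hb hc
    | smul r _ _ hb => rw [inr_smul]; exact Subalgebra.smul_mem _ hb r

theorem adjoin_image_inr_eq_top {s : Set A} (hs : NonUnitalAlgebra.adjoin R s = ⊤) :
    Algebra.adjoin R ((↑) '' s : Set (Unitization R A)) = ⊤ := by
  refine eq_top_iff.mpr fun u _ ↦ ?_
  rw [← inl_fst_add_inr_snd_eq u, ← algebraMap_eq_inl]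
  exact add_mem (Subalgebra.algebraMap_mem _ u.fst)
    (inr_mem_adjoin_image_inr_iff.mpr (hs ▸ trivial))

end Semiring

theorem fst_aeval_inr [NonUnitalCommSemiring A] [Module R A] [SMulCommClass R A A]
    [IsScalarTower R A A] {σ : Type*} (x : σ → A) (P : MvPolynomial σ R) :
    (aeval (fun i ↦ (x i : Unitization R A)) P).fst = constantCoeff P := by
  have hfst : (fstHom R A).comp (aeval fun i ↦ (x i : Unitization R A)) =
      aeval (fun _ ↦ (0 : R)) := by
    ext i; simp
  simpa [aeval_zero'] using congr($hfst P)

end Unitization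

theorem isSFG_iff_algebraicIndepOn {S : Set X} :
    IsSFG 𝕜 S ↔ AlgebraicIndepOn 𝕜 (fun y : X ↦ (y : Unitization 𝕜 X)) S := by
  refine ⟨fun hS ↦ algebraicIndependent_of_finite_type fun t ht ↦ ?_,
    fun hS n x hxS hx P hP _ hPx ↦ ?_⟩
  · have := ht.fintype
    set e := (Fintype.equivFin t).symm
    rw [← algebraicIndependent_equiv e]
    refine algebraicIndependent_iff.mpr fun P hPx ↦ by_contra fun hP ↦ ?_
    refine hS _ (fun k ↦ (e k : X)) (fun k ↦ (e k).1.2)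
      (Subtype.val_injective.comp (Subtype.val_injective.comp e.injective)) P hP ?_ hPx
    rw [← Unitization.fst_aeval_inr (R := 𝕜) (fun k ↦ (e k : X)) P]
    exact congrArg (fun u : Unitization 𝕜 X ↦ u.fst) hPx
  · exact hP (algebraicIndependent_iff.mp (hS.comp (fun k ↦ ⟨x k, hxS k⟩)
      fun _ _ h ↦ hx (congrArg Subtype.val h)) P hPx)

/-- Let `X` be a commutative free algebra over `𝕜` (`𝕜 = ℝ` or `ℂ`) with set
of free generators `A`, let `S ⊆ A`, let `R ⊆ ⟨S⟩` be a set of free generators, and let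
`x ∈ X \ ⟨S⟩`.  Then `R ∪ {x}` is a set of free generators. -/
theorem stmt13 (A S R : Set X) (hA : IsSFG 𝕜 A)
    (hXfree : NonUnitalAlgebra.adjoin 𝕜 A = (⊤ : NonUnitalSubalgebra 𝕜 X))
    (hSA : S ⊆ A) (hR : R ⊆ (NonUnitalAlgebra.adjoin 𝕜 S : Set X)) (hRsfg : IsSFG 𝕜 R)
    (x : X) (hx : x ∉ NonUnitalAlgebra.adjoin 𝕜 S) :
    IsSFG 𝕜 (R ∪ {x}) := by
  rw [isSFG_iff_algebraicIndepOn 𝕜] at hA hRsfg ⊢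
  rw [Set.union_singleton]
  have hRS : Algebra.adjoin 𝕜 ((↑) '' R) ≤
      Algebra.adjoin 𝕜 ((↑) '' S : Set (Unitization 𝕜 X)) :=
    Algebra.adjoin_le <| Set.image_subset_iff.mpr fun r hr ↦
      Unitization.inr_mem_adjoin_image_inr_iff.mpr (hR hr)
  have hxS : (x : Unitization 𝕜 X) ∉ Algebra.adjoin 𝕜 ((↑) '' S) := by
    rwa [Unitization.inr_mem_adjoin_image_inr_iff]
  exact hRsfg.insert <| (hA.transcendental_adjoin_image_of_notMem
    (Unitization.adjoin_image_inr_eq_top hXfree) hSA hxS).of_tower_top_of_subalgebra_le hRS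
end
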